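/- arXiv:2106.02932 — 11 statements merged into one kernel-verified Lean document; each statement's English description precedes it below -/
import Mathlib

section
/- Let X be a normal topological space and M a proper nonempty subset of X. Then M is both a Gδ-set and an Fσ-set in X if and only if there exists an idempotent f in the ring B₁(X) of Baire one functions such that the zero set Z(f) = M. -/
open Filter Topology

def IsBaireOne {X : Type*} [TopologicalSpace X] (f : X → ℝ) : Prop :=
  ∃ F : ℕ → X → ℝ, (∀ n, Continuous (F n)) ∧
    ∀ x, Filter.Tendsto (fun n => F n x) Filter.atTop (nhds (f x))

def B1 (X : Type*) [TopologicalSpace X] : Subring (X → ℝ) where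
  carrier := {f | IsBaireOne f}
  zero_mem' := ⟨fun _ _ => 0, fun _ => continuous_const, fun _ => tendsto_const_nhds⟩
  one_mem' := ⟨fun _ _ => 1, fun _ => continuous_const, fun _ => tendsto_const_nhds⟩
  add_mem' := by
    rintro f g ⟨F, hF, hFf⟩ ⟨G, hG, hGg⟩
    exact ⟨fun n => F n + G n, fun n => (hF n).add (hG n), fun x => (hFf x).add (hGg x)⟩
  mul_mem' := by
    rintro f g ⟨F, hF, hFf⟩ ⟨G, hG, hGg⟩
    exact ⟨fun n => F n * G n, fun n => (hF n).mul (hG n), fun x => (hFf x).mul (hGg x)⟩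
  neg_mem' := by
    rintro f ⟨F, hF, hFf⟩
    exact ⟨fun n => -F n, fun n => (hF n).neg, fun x => (hFf x).neg⟩

def zset {X : Type*} [TopologicalSpace X] (f : ↥(B1 X)) : Set X := {x | (f : X → ℝ) x = 0}

noncomputable def chi {X : Type*} (p : X) : X → ℝ := Set.indicator {p} (fun _ => 1)

def IsFsigma {X : Type*} [TopologicalSpace X] (s : Set X) : Prop :=
  ∃ c : ℕ → Set X, (∀ n, IsClosed (c n)) ∧ s = ⋃ n, c n

/-!
If `M` is both `Gδ` and `Fσ`, write `M` and `Mᶜ` as increasing unions of closed sets `Kₙ` and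
`Cₙ`; Urysohn functions equal to `0` on `Kₙ` and `1` on `Cₙ` converge pointwise to the indicator
of `Mᶜ`, an idempotent Baire one function with zero set `M`. Conversely, an idempotent `f` takes
only the values `0` and `1`, so if continuous `Fₙ → f` pointwise, then `x ∈ Z(f)` iff eventually
`Fₙ x ≤ 1/2`, and `x ∉ Z(f)` iff eventually `Fₙ x ≥ 1/2`; both sets are countable unions of
closed sets.
-/

open Set

theorem IsFsigma.isGδ_compl {X : Type*} [TopologicalSpace X] {s : Set X} (hs : IsFsigma s) :
    IsGδ sᶜ := by
  obtain ⟨c, hc, rfl⟩ := hs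
  rw [compl_iUnion]
  exact IsGδ.iInter_of_isOpen fun n => (hc n).isOpen_compl

theorem IsGδ.isFsigma_compl {X : Type*} [TopologicalSpace X] {s : Set X} (hs : IsGδ s) :
    IsFsigma sᶜ := by
  obtain ⟨U, hU, rfl⟩ := hs.eq_iInter_nat
  exact ⟨fun n => (U n)ᶜ, fun n => (hU n).isClosed_compl, compl_iInter U⟩

theorem IsFsigma.exists_monotone_isClosed {X : Type*} [TopologicalSpace X] {s : Set X}
    (hs : IsFsigma s) : ∃ K : ℕ → Set X, (∀ n, IsClosed (K n)) ∧ Monotone K ∧ s = ⋃ n, K n := by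
  obtain ⟨c, hc, rfl⟩ := hs
  refine ⟨accumulate c, fun n => ?_, monotone_accumulate, iUnion_accumulate.symm⟩
  exact (finite_Iic n).isClosed_biUnion fun i _ => hc i

theorem isFsigma_setOf_eventually_mem {X Y : Type*} [TopologicalSpace X] [TopologicalSpace Y]
    {F : ℕ → X → Y} (hF : ∀ n, Continuous (F n)) {C : Set Y} (hC : IsClosed C) :
    IsFsigma {x | ∀ᶠ n in atTop, F n x ∈ C} := by
  refine ⟨fun N => ⋂ n ≥ N, F n ⁻¹' C,
    fun N => isClosed_biInter fun n _ => hC.preimage (hF n), ?_⟩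
  ext x
  simp only [mem_ofPred_eq, eventually_atTop, mem_iUnion, mem_iInter, mem_preimage]

theorem setOf_eventually_mem_eq_preimage {X Y : Type*} [TopologicalSpace Y]
    {F : ℕ → X → Y} {f : X → Y} (hFf : ∀ x, Tendsto (fun n => F n x) atTop (𝓝 (f x)))
    {C : Set Y} (hC : IsClosed C) (hfr : ∀ x, f x ∉ frontier C) :
    {x | ∀ᶠ n in atTop, F n x ∈ C} = f ⁻¹' C := by
  ext x
  refine ⟨fun h => hC.mem_of_tendsto (hFf x) h, fun hx => hFf x ?_⟩
  have hint : f x ∈ interior C := by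
    by_contra h
    exact hfr x ⟨hC.closure_eq.symm ▸ hx, h⟩
  exact mem_interior_iff_mem_nhds.mp hint

theorem IsBaireOne.isFsigma_preimage {X : Type*} [TopologicalSpace X] {f : X → ℝ}
    (hf : IsBaireOne f) {C : Set ℝ} (hC : IsClosed C) (hfr : ∀ x, f x ∉ frontier C) :
    IsFsigma (f ⁻¹' C) := by
  obtain ⟨F, hF, hFf⟩ := hf
  rw [← setOf_eventually_mem_eq_preimage hFf hC hfr]
  exact isFsigma_setOf_eventually_mem hF hC

theorem isBaireOne_indicator_compl {X : Type*} [TopologicalSpace X] [NormalSpace X]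
    {s : Set X} (hG : IsGδ s) (hF : IsFsigma s) : IsBaireOne (sᶜ.indicator 1) := by
  obtain ⟨K, hK, hKmono, hKs⟩ := hF.exists_monotone_isClosed
  obtain ⟨C, hC, hCmono, hCs⟩ := hG.isFsigma_compl.exists_monotone_isClosed
  have hdisj : ∀ n, Disjoint (K n) (C n) := fun n =>
    disjoint_left.mpr fun x hxK hxC =>
      (hCs ▸ mem_iUnion_of_mem n hxC : x ∈ sᶜ) (hKs ▸ mem_iUnion_of_mem n hxK)
  choose g hg0 hg1 _ using fun n => exists_continuous_zero_one_of_isClosed (hK n) (hC n) (hdisj n)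
  refine ⟨fun n => g n, fun n => (g n).continuous, fun x => tendsto_const_nhds.congr' ?_⟩
  by_cases hx : x ∈ s
  · obtain ⟨N, hN⟩ := mem_iUnion.mp (hKs ▸ hx)
    filter_upwards [eventually_ge_atTop N] with n hn
    simp [hx, hg0 n (hKmono hn hN)]
  · obtain ⟨N, hN⟩ := mem_iUnion.mp (hCs ▸ hx : x ∈ ⋃ n, C n)
    filter_upwards [eventually_ge_atTop N] with n hn
    simp [hx, hg1 n (hCmono hn hN)]

theorem B1.apply_eq_zero_or_one_of_mul_self_eq {X : Type*} [TopologicalSpace X] {f : B1 X}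
    (hf : f * f = f) (x : X) : (f : X → ℝ) x = 0 ∨ (f : X → ℝ) x = 1 :=
  IsIdempotentElem.iff_eq_zero_or_one.mp (congrFun (congrArg Subtype.val hf) x)

theorem B1.isFsigma_preimage_of_mul_self_eq {X : Type*} [TopologicalSpace X] {f : B1 X}
    (hf : f * f = f) {C : Set ℝ} (hC : IsClosed C) (hfr : frontier C ⊆ {1 / 2}) :
    IsFsigma ((f : X → ℝ) ⁻¹' C) := by
  refine f.2.isFsigma_preimage hC fun x hx => ?_
  have h_half : (f : X → ℝ) x = 1 / 2 := hfr hx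
  rcases apply_eq_zero_or_one_of_mul_self_eq hf x with h | h <;> norm_num [h] at h_half

theorem stmt_0_general {X : Type*} [TopologicalSpace X] [NormalSpace X]
    (M : Set X) :
    (IsGδ M ∧ IsFsigma M) ↔ ∃ f : ↥(B1 X), f * f = f ∧ zset f = M := by
  constructor
  · rintro ⟨hG, hF⟩
    refine ⟨⟨Mᶜ.indicator 1, isBaireOne_indicator_compl hG hF⟩, ?_, ?_⟩
    · ext x
      by_cases hx : x ∈ M <;> simp [hx]
    · ext x
      simp [zset]
  · rintro ⟨f, hf, rfl⟩
    have hzset : zset f = (f : X → ℝ) ⁻¹' Iic (1 / 2) := by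
      ext x
      rcases B1.apply_eq_zero_or_one_of_mul_self_eq hf x with h | h <;> norm_num [zset, h]
    have hzsetc : (zset f)ᶜ = (f : X → ℝ) ⁻¹' Ici (1 / 2) := by
      ext x
      rcases B1.apply_eq_zero_or_one_of_mul_self_eq hf x with h | h <;> norm_num [zset, h]
    refine ⟨?_, ?_⟩
    · rw [← compl_compl (zset f), hzsetc]
      exact (B1.isFsigma_preimage_of_mul_self_eq hf isClosed_Ici
        (frontier_Ici_subset _)).isGδ_compl
    · rw [hzset]
      exact B1.isFsigma_preimage_of_mul_self_eq hf isClosed_Iic (frontier_Iic_subset _)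

theorem stmt_0 {X : Type*} [TopologicalSpace X] [T1Space X] [NormalSpace X]
    (M : Set X) (hne : M.Nonempty) (hpr : M ≠ Set.univ) :
    (IsGδ M ∧ IsFsigma M) ↔ ∃ f : ↥(B1 X), f * f = f ∧ zset f = M :=
  stmt_0_general M
end

section
/- Let X be a normal topological space and p ∈ X. If {p} is a Gδ-set, then the characteristic function χ_{p} of {p} is a Baire one function on X. -/
open Filter Topology

theorem stmt_1 {X : Type*} [TopologicalSpace X] [T1Space X] [NormalSpace X]
    (p : X) (hp : IsGδ ({p} : Set X)) :
    IsBaireOne (chi p) := by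
  obtain ⟨U, hUopen, hUeq⟩ := hp.eq_iInter_nat
  set V : ℕ → Set X := fun n => ⋂ k ∈ Set.Iic n, U k with hV
  have hVopen : ∀ n, IsOpen (V n) := fun n =>
    (Set.finite_Iic n).isOpen_biInter (fun k _ => hUopen k)
  have hpV : ∀ n, p ∈ V n := by
    intro n
    refine Set.mem_iInter₂.2 fun k _ => ?_
    have : p ∈ ⋂ n, U n := by rw [← hUeq]; exact rfl
    exact Set.mem_iInter.1 this k
  have key : ∀ n, ∃ f : C(X, ℝ), Set.EqOn f 0 (V n)ᶜ ∧ Set.EqOn f 1 {p} ∧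
      ∀ x, f x ∈ Set.Icc (0:ℝ) 1 := by
    intro n
    refine exists_continuous_zero_one_of_isClosed (hVopen n).isClosed_compl isClosed_singleton ?_
    rw [Set.disjoint_compl_left_iff_subset, Set.singleton_subset_iff]
    exact hpV n
  choose f hf0 hf1 hf01 using key
  refine ⟨fun n => f n, fun n => (f n).continuous, fun x => ?_⟩
  rcases eq_or_ne x p with rfl | hx
  · have : ∀ n, f n x = 1 := fun n => hf1 n rfl
    simp only [this, chi, Set.indicator_of_mem (Set.mem_singleton x)]
    exact tendsto_const_nhds
  · have hxnot : x ∉ ⋂ n, U n := by rw [← hUeq]; exact hx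
    obtain ⟨m, hm⟩ := Set.mem_iInter.not.1 hxnot |> not_forall.1
    have hev : ∀ n ≥ m, f n x = 0 := by
      intro n hn
      apply hf0 n
      intro hxV
      exact hm (Set.mem_iInter₂.1 hxV m hn)
    have : chi p x = 0 := Set.indicator_of_notMem (by simpa using hx) _
    rw [this]
    refine Tendsto.congr' ?_ tendsto_const_nhds
    filter_upwards [eventually_ge_atTop m] with n hn
    exact (hev n hn).symm
end

section
/- Let X be a normal space such that every one-point subset of X is Gδ. A nonzero ideal I of B₁(X) is minimal if and only if the set Z[I] = {Z(f) : f ∈ I} has exactly 2 elements. -/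
open Filter Topology

lemma chi_apply_self {X : Type*} (p : X) : chi p p = 1 := by
  simp [chi]

lemma chi_apply_ne {X : Type*} {p x : X} (h : x ≠ p) : chi p x = 0 := by
  simp [chi, h]

lemma chi_isBaireOne {X : Type*} [TopologicalSpace X] [T1Space X] [NormalSpace X]
    (hG : ∀ p : X, IsGδ ({p} : Set X)) (p : X) : IsBaireOne (chi p) := by
  obtain ⟨V, hVopen, hVeq⟩ := (hG p).eq_iInter_nat
  set W : ℕ → Set X := fun n => ⋂ k ∈ Finset.range (n + 1), V k with hW
  have hWopen : ∀ n, IsOpen (W n) := fun n => isOpen_biInter_finset fun k _ => hVopen k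
  have hpW : ∀ n, p ∈ W n := by
    intro n
    simp only [hW, Set.mem_iInter]
    intro k _
    have : p ∈ ⋂ n, V n := by rw [← hVeq]; exact rfl
    exact Set.mem_iInter.1 this k
  have hurysohn : ∀ n, ∃ f : C(X, ℝ), Set.EqOn f 0 (W n)ᶜ ∧ Set.EqOn f 1 {p} ∧
      ∀ x, f x ∈ Set.Icc (0:ℝ) 1 := by
    intro n
    apply exists_continuous_zero_one_of_isClosed (hWopen n).isClosed_compl isClosed_singleton
    simp only [Set.disjoint_singleton_right, Set.mem_compl_iff, not_not]
    exact hpW n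
  choose F hF0 hF1 _ using hurysohn
  refine ⟨fun n => F n, fun n => (F n).continuous, fun x => ?_⟩
  by_cases hx : x = p
  · subst hx
    have : ∀ n, F n x = 1 := fun n => hF1 n rfl
    simp only [this, chi_apply_self]
    exact tendsto_const_nhds
  · have hxo : x ∉ ⋂ n, V n := by rw [← hVeq]; simpa using hx
    obtain ⟨N, hN⟩ : ∃ N, x ∉ V N := by
      by_contra h; push_neg at h; exact hxo (Set.mem_iInter.2 h)
    rw [chi_apply_ne hx]
    apply tendsto_atTop_of_eventually_const (i₀ := N)
    intro n hn
    apply hF0 n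
    simp only [hW, Set.mem_compl_iff, Set.mem_iInter, not_forall]
    exact ⟨N, by simpa [Finset.mem_range] using Nat.lt_succ_of_le hn, hN⟩

noncomputable def eB1 {X : Type*} [TopologicalSpace X] [T1Space X] [NormalSpace X]
    (hG : ∀ p : X, IsGδ ({p} : Set X)) (p : X) : ↥(B1 X) := ⟨chi p, chi_isBaireOne hG p⟩

def cB1 {X : Type*} [TopologicalSpace X] (c : ℝ) : ↥(B1 X) :=
  ⟨fun _ => c, ⟨fun _ _ => c, fun _ => continuous_const, fun _ => tendsto_const_nhds⟩⟩

section helpers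
variable {X : Type*} [TopologicalSpace X] [T1Space X] [NormalSpace X]
    (hG : ∀ p : X, IsGδ ({p} : Set X))

lemma b1_apply_mul (f g : ↥(B1 X)) (x : X) : ((f * g : ↥(B1 X)) : X → ℝ) x
    = (f : X → ℝ) x * (g : X → ℝ) x := rfl

lemma b1_ext {f g : ↥(B1 X)} (h : ∀ x, (f : X → ℝ) x = (g : X → ℝ) x) : f = g :=
  Subtype.ext (funext h)

lemma b1_ne_zero {f : ↥(B1 X)} {x : X} (h : (f : X → ℝ) x ≠ 0) : f ≠ 0 := by
  intro hf; apply h; rw [hf]; rfl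

lemma mul_eB1 (f : ↥(B1 X)) (p : X) :
    f * eB1 hG p = cB1 ((f : X → ℝ) p) * eB1 hG p := by
  apply b1_ext
  intro x
  rw [b1_apply_mul, b1_apply_mul]
  by_cases hx : x = p
  · subst hx; rfl
  · show (f : X → ℝ) x * chi p x = _ * chi p x
    rw [chi_apply_ne hx, mul_zero, mul_zero]

lemma eB1_apply_self (p : X) : ((eB1 hG p : ↥(B1 X)) : X → ℝ) p = 1 := chi_apply_self p

lemma eB1_ne_zero (p : X) : eB1 hG p ≠ 0 :=
  b1_ne_zero (x := p) (by rw [eB1_apply_self]; norm_num)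

lemma zset_c_mul_e {c : ℝ} (hc : c ≠ 0) (p : X) :
    zset (cB1 c * eB1 hG p) = {p}ᶜ := by
  ext x
  simp only [zset, Set.mem_setOf_eq, Set.mem_compl_iff, Set.mem_singleton_iff]
  rw [b1_apply_mul]
  show c * chi p x = 0 ↔ ¬ x = p
  constructor
  · intro h hx; subst hx; rw [chi_apply_self, mul_one] at h; exact hc h
  · intro h; rw [chi_apply_ne h, mul_zero]

lemma zset_zero : zset (0 : ↥(B1 X)) = Set.univ := by
  ext x
  simp only [Set.mem_univ, iff_true]
  show ((0 : ↥(B1 X)) : X → ℝ) x = 0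
  rfl

lemma eq_c_mul_e {g : ↥(B1 X)} {p : X} (hgp : ∀ q, q ≠ p → (g : X → ℝ) q = 0) :
    g = cB1 ((g : X → ℝ) p) * eB1 hG p := by
  apply b1_ext
  intro x
  rw [b1_apply_mul]
  by_cases hx : x = p
  · subst hx; show _ = _ * chi x x; rw [chi_apply_self, mul_one]; rfl
  · show _ = _ * chi p x; rw [chi_apply_ne hx, mul_zero, hgp x hx]

lemma cB1_inv_cancel {c : ℝ} (hc : c ≠ 0) (f : ↥(B1 X)) :
    cB1 c⁻¹ * (cB1 c * f) = f := by
  apply b1_ext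
  intro x
  rw [b1_apply_mul, b1_apply_mul]
  show c⁻¹ * (c * _) = _
  rw [← mul_assoc, inv_mul_cancel₀ hc, one_mul]

end helpers

theorem stmt_3 {X : Type*} [TopologicalSpace X] [T1Space X] [NormalSpace X]
    (hG : ∀ p : X, IsGδ ({p} : Set X))
    (I : Ideal ↥(B1 X)) (hI : I ≠ ⊥) :
    IsAtom I ↔ (zset '' (I : Set ↥(B1 X))).ncard = 2 := by
  classical
  -- a general fact: if g ∈ I is nonzero at q, then {q}ᶜ ∈ zset '' I
  have key : ∀ g ∈ I, ∀ q : X, (g : X → ℝ) q ≠ 0 → {q}ᶜ ∈ zset '' (I : Set ↥(B1 X)) := by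
    intro g hg q hq
    refine ⟨g * eB1 hG q, I.mul_mem_right _ hg, ?_⟩
    rw [mul_eB1 hG g q]
    exact zset_c_mul_e hG hq q
  have univ_mem : Set.univ ∈ zset '' (I : Set ↥(B1 X)) :=
    ⟨0, I.zero_mem, zset_zero⟩
  constructor
  · rintro ⟨-, hmin⟩
    -- extract a nonzero element of I
    obtain ⟨f, hfI, hf0⟩ := Submodule.exists_mem_ne_zero_of_ne_bot hI
    obtain ⟨p, hp⟩ : ∃ p, (f : X → ℝ) p ≠ 0 := by
      by_contra h; push_neg at h
      exact hf0 (b1_ext (fun x => h x))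
    -- the element e_p lies in I
    have heI : eB1 hG p ∈ I := by
      have h1 : f * eB1 hG p ∈ I := I.mul_mem_right _ hfI
      rw [mul_eB1 hG f p] at h1
      have h2 := I.mul_mem_left (cB1 ((f : X → ℝ) p)⁻¹) h1
      rwa [cB1_inv_cancel hp] at h2
    -- I = span {e_p}
    have hspan : Ideal.span {eB1 hG p} = I := by
      by_contra hne
      have hlt : Ideal.span {eB1 hG p} < I :=
        lt_of_le_of_ne ((Ideal.span_singleton_le_iff_mem I).2 heI) hne
      have := hmin _ hlt
      rw [Ideal.span_singleton_eq_bot] at this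
      exact eB1_ne_zero hG p this
    -- compute the image
    have himg : zset '' (I : Set ↥(B1 X)) = {Set.univ, {p}ᶜ} := by
      apply Set.Subset.antisymm
      · rintro S ⟨g, hgI, rfl⟩
        rw [← hspan, SetLike.mem_coe, Ideal.mem_span_singleton] at hgI
        obtain ⟨c, rfl⟩ := hgI
        rw [mul_comm, mul_eB1 hG c p]
        by_cases hc : (c : X → ℝ) p = 0
        · left
          have : cB1 ((c : X → ℝ) p) * eB1 hG p = 0 := by
            apply b1_ext; intro x
            rw [b1_apply_mul, hc]
            show (0:ℝ) * _ = _
            rw [zero_mul]; rfl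
          rw [this, zset_zero]
        · right
          exact zset_c_mul_e hG hc p
      · rintro S (rfl | rfl)
        · exact univ_mem
        · exact key _ heI p (by rw [eB1_apply_self hG]; norm_num)
    rw [himg]
    rw [Set.ncard_pair]
    intro h
    have : p ∈ ({p}ᶜ : Set X) := by rw [← h]; trivial
    exact this rfl
  · intro hcard
    obtain ⟨A, B, hAB, hABeq⟩ := Set.ncard_eq_two.1 hcard
    have hfin : (zset '' (I : Set ↥(B1 X))).Finite := by
      rw [hABeq]; exact (Set.finite_singleton B).insert A
    -- there is a zero set S ≠ univ in the image
    have hex : ∃ S ∈ zset '' (I : Set ↥(B1 X)), S ≠ Set.univ := by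
      rcases eq_or_ne A Set.univ with rfl | hA
      · exact ⟨B, by rw [hABeq]; exact Set.mem_insert_iff.2 (Or.inr rfl), fun h => hAB h.symm⟩
      · exact ⟨A, by rw [hABeq]; exact Set.mem_insert _ _, hA⟩
    obtain ⟨S, ⟨f, hfI, hfS⟩, hSuniv⟩ := hex
    obtain ⟨p, hp⟩ : ∃ p, (f : X → ℝ) p ≠ 0 := by
      by_contra h; push_neg at h
      exact hSuniv (by rw [← hfS]; ext x; simp [zset, h x])
    have hpcmem : {p}ᶜ ∈ zset '' (I : Set ↥(B1 X)) := key f hfI p hp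
    -- at most two elements: the image can't contain a third set {q}ᶜ with q ≠ p
    have honly : ∀ g ∈ I, ∀ q, q ≠ p → (g : X → ℝ) q = 0 := by
      intro g hgI q hqp
      by_contra hgq
      have hqcmem : {q}ᶜ ∈ zset '' (I : Set ↥(B1 X)) := key g hgI q hgq
      have h3 : ({Set.univ, {p}ᶜ, {q}ᶜ} : Set (Set X)) ⊆ zset '' (I : Set ↥(B1 X)) := by
        rintro T (rfl | rfl | rfl)
        exacts [univ_mem, hpcmem, hqcmem]
      have hd1 : (Set.univ : Set X) ≠ {p}ᶜ := by
        intro h; have : p ∈ ({p}ᶜ : Set X) := by rw [← h]; trivial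
        exact this rfl
      have hd2 : (Set.univ : Set X) ≠ {q}ᶜ := by
        intro h; have : q ∈ ({q}ᶜ : Set X) := by rw [← h]; trivial
        exact this rfl
      have hd3 : ({p}ᶜ : Set X) ≠ {q}ᶜ := by
        intro h
        exact hqp (Set.singleton_eq_singleton_iff.1 (compl_injective h)).symm
      have : 3 ≤ (zset '' (I : Set ↥(B1 X))).ncard := by
        calc 3 = ({Set.univ, {p}ᶜ, {q}ᶜ} : Set (Set X)).ncard := by
              rw [Set.ncard_insert_of_notMem (by simp [hd1, hd2])
                (Set.finite_singleton _ |>.insert _),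
                Set.ncard_pair hd3]
          _ ≤ _ := Set.ncard_le_ncard h3 hfin
      omega
    -- every element of I has the shape c * e_p
    constructor
    · exact hI
    intro J hJ
    by_contra hJbot
    obtain ⟨g, hgJ, hg0⟩ := Submodule.exists_mem_ne_zero_of_ne_bot hJbot
    have hgI : g ∈ I := hJ.le hgJ
    have hgshape := eq_c_mul_e hG (fun q hq => honly g hgI q hq)
    have hgp : (g : X → ℝ) p ≠ 0 := by
      intro h
      apply hg0
      rw [hgshape, h]
      apply b1_ext; intro x; rw [b1_apply_mul]; show (0:ℝ) * _ = _; rw [zero_mul]; rfl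
    obtain ⟨c, hc0, hgc⟩ : ∃ c : ℝ, c ≠ 0 ∧ g = cB1 c * eB1 hG p := ⟨_, hgp, hgshape⟩
    have heJ : eB1 hG p ∈ J := by
      have h1 : cB1 c⁻¹ * g ∈ J := J.mul_mem_left _ hgJ
      rwa [hgc, cB1_inv_cancel hc0] at h1
    -- every element of I is in J, contradiction with J < I
    have : I ≤ J := by
      intro h hhI
      rw [eq_c_mul_e hG (fun q hq => honly h hhI q hq)]
      exact J.mul_mem_left _ heJ
    exact absurd (le_antisymm hJ.le this) (ne_of_lt hJ)
end

section
/- Let X be a normal space such that every one-point subset of X is Gδ. Then the socle of B₁(X) consists exactly of those Baire one functions that vanish everywhere except on a finite subset of X. -/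
open Filter Topology

lemma const_mem_B1 {X : Type*} [TopologicalSpace X] (r : ℝ) : (fun _ : X => r) ∈ B1 X :=
  ⟨fun _ _ => r, fun _ => continuous_const, fun _ => tendsto_const_nhds⟩

lemma chi_mem_B1 {X : Type*} [TopologicalSpace X] [T1Space X] [NormalSpace X]
    (hG : ∀ p : X, IsGδ ({p} : Set X)) (p : X) : chi p ∈ B1 X := by
  obtain ⟨U, hU, hUeq⟩ := (hG p).eq_iInter_nat
  set V : ℕ → Set X := fun n => ⋂ i ∈ Finset.range (n + 1), U i with hV
  have hVopen : ∀ n, IsOpen (V n) := fun n => isOpen_biInter_finset fun i _ => hU i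
  have hpU : ∀ i, p ∈ U i := fun i =>
    Set.mem_iInter.1 (hUeq ▸ Set.mem_singleton p) i
  have hpV : ∀ n, p ∈ V n := fun n => Set.mem_iInter₂.2 fun i _ => hpU i
  have key : ∀ n, ∃ f : C(X, ℝ), Set.EqOn f 0 (V n)ᶜ ∧ Set.EqOn f 1 ({p} : Set X) ∧
      ∀ x, f x ∈ Set.Icc (0 : ℝ) 1 := fun n =>
    exists_continuous_zero_one_of_isClosed (isClosed_compl_iff.2 (hVopen n))
      isClosed_singleton (Set.disjoint_singleton_right.2 (by simp [hpV n]))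
  choose F hF0 hF1 _ using key
  refine ⟨fun n => F n, fun n => (F n).continuous, fun x => ?_⟩
  by_cases hx : x = p
  · subst hx
    have h1 : ∀ n, F n x = 1 := fun n => hF1 n rfl
    rw [chi_apply_self]
    simp only [h1]
    exact tendsto_const_nhds
  · have hxm : ∃ m, x ∉ U m := by
      by_contra h
      push_neg at h
      have hx' : x ∈ ⋂ n, U n := Set.mem_iInter.2 h
      rw [← hUeq] at hx'
      exact hx hx'
    obtain ⟨m, hm⟩ := hxm
    rw [chi_apply_ne hx]
    apply tendsto_const_nhds.congr'
    filter_upwards [eventually_ge_atTop m] with n hn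
    have hxV : x ∈ (V n)ᶜ := by
      intro hxV
      exact hm (Set.mem_iInter₂.1 hxV m (Finset.mem_range.2 (Nat.lt_succ_of_le hn)))
    exact (hF0 n hxV).symm

/-- The ideal of Baire one functions with finite support. -/
def finSuppIdeal (X : Type*) [TopologicalSpace X] : Ideal ↥(B1 X) where
  carrier := {f | {x : X | (f : X → ℝ) x ≠ 0}.Finite}
  zero_mem' := by simp
  add_mem' := by
    intro f g hf hg
    refine (hf.union hg).subset fun x hx => ?_
    by_contra h
    simp only [Set.mem_union, Set.mem_setOf_eq, not_or, not_not] at h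
    exact hx (by simp [h.1, h.2])
  smul_mem' := by
    intro c f hf
    refine hf.subset fun x hx => ?_
    simp only [Set.mem_setOf_eq, smul_eq_mul] at hx ⊢
    intro h0
    exact hx (by
      rw [show ((c * f : ↥(B1 X)) : X → ℝ) x = (c : X → ℝ) x * (f : X → ℝ) x from rfl,
        h0, mul_zero])

lemma atom_le_finSupp {X : Type*} [TopologicalSpace X] [T1Space X] [NormalSpace X]
    (hG : ∀ p : X, IsGδ ({p} : Set X)) (J : Ideal ↥(B1 X)) (hJ : IsAtom J) :
    J ≤ finSuppIdeal X := by
  intro g hg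
  by_cases hg0 : g = 0
  · simp [hg0, finSuppIdeal, Ideal.zero_mem]
  obtain ⟨p, hp⟩ : ∃ p : X, (g : X → ℝ) p ≠ 0 := by
    by_contra h
    push_neg at h
    exact hg0 (Subtype.ext (funext fun x => h x))
  set χ : ↥(B1 X) := ⟨chi p, chi_mem_B1 hG p⟩ with hχ
  set h : ↥(B1 X) := χ * g with hh
  have hhJ : h ∈ J := J.mul_mem_left χ hg
  have hne : h ≠ 0 := by
    intro h0
    have := congrFun (congrArg Subtype.val h0) p
    simp only [hh, hχ] at this
    rw [show ((χ * g : ↥(B1 X)) : X → ℝ) p = chi p p * (g : X → ℝ) p from rfl,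
      chi_apply_self, one_mul] at this
    exact hp this
  have hspanle : Ideal.span {h} ≤ J := (Ideal.span_le).2 (Set.singleton_subset_iff.2 hhJ)
  have hspan_ne : Ideal.span {h} ≠ ⊥ := by
    rw [Ne, Ideal.span_singleton_eq_bot]; exact hne
  have hspan_eq : Ideal.span {h} = J := by
    rcases hspanle.lt_or_eq with hlt | heq
    · exact absurd (hJ.2 _ hlt) hspan_ne
    · exact heq
  have hgmem : g ∈ Ideal.span {h} := hspan_eq ▸ hg
  obtain ⟨c, hc⟩ := Ideal.mem_span_singleton'.1 hgmem
  have hsubset : {x : X | (g : X → ℝ) x ≠ 0} ⊆ {p} := by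
    intro x hx
    by_contra hxp
    have hxp' : x ≠ p := hxp
    have := congrFun (congrArg Subtype.val hc) x
    rw [show ((c * h : ↥(B1 X)) : X → ℝ) x
        = (c : X → ℝ) x * (chi p x * (g : X → ℝ) x) from rfl,
      chi_apply_ne hxp', zero_mul, mul_zero] at this
    exact hx this.symm
  exact (Set.finite_singleton p).subset hsubset

lemma isAtom_span_chi {X : Type*} [TopologicalSpace X] [T1Space X] [NormalSpace X]
    (hG : ∀ p : X, IsGδ ({p} : Set X)) (p : X) :
    IsAtom (Ideal.span {(⟨chi p, chi_mem_B1 hG p⟩ : ↥(B1 X))}) := by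
  set χ : ↥(B1 X) := ⟨chi p, chi_mem_B1 hG p⟩ with hχ
  constructor
  · rw [Ne, Ideal.span_singleton_eq_bot]
    intro h0
    have := congrFun (congrArg Subtype.val h0) p
    rw [show (χ : X → ℝ) p = chi p p from rfl, chi_apply_self] at this
    exact one_ne_zero this
  · intro K hK
    by_contra hKbot
    obtain ⟨g, hgK, hg0⟩ := Submodule.exists_mem_ne_zero_of_ne_bot hKbot
    have hgspan : g ∈ Ideal.span {χ} := hK.le hgK
    obtain ⟨c, hc⟩ := Ideal.mem_span_singleton'.1 hgspan
    have hgx : ∀ x, (g : X → ℝ) x = (c : X → ℝ) x * chi p x :=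
      fun x => (congrFun (congrArg Subtype.val hc) x).symm
    have hgne : ∀ x ≠ p, (g : X → ℝ) x = 0 := fun x hx => by
      rw [hgx x, chi_apply_ne hx, mul_zero]
    have hgp : (g : X → ℝ) p ≠ 0 := by
      intro h0
      apply hg0
      apply Subtype.ext
      funext x
      by_cases hx : x = p
      · subst hx; exact h0
      · exact hgne x hx
    set d : ↥(B1 X) := ⟨fun _ => ((g : X → ℝ) p)⁻¹, const_mem_B1 _⟩ with hd
    have hdg : d * g = χ := by
      apply Subtype.ext
      funext x
      by_cases hx : x = p
      · subst hx
        rw [show ((d * g : ↥(B1 X)) : X → ℝ) x = ((g : X → ℝ) x)⁻¹ * (g : X → ℝ) x from rfl,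
          inv_mul_cancel₀ hgp, show (χ : X → ℝ) x = chi x x from rfl, chi_apply_self]
      · rw [show ((d * g : ↥(B1 X)) : X → ℝ) x
            = ((g : X → ℝ) p)⁻¹ * (g : X → ℝ) x from rfl,
          hgne x hx, mul_zero, show (χ : X → ℝ) x = chi p x from rfl, chi_apply_ne hx]
    have hχK : χ ∈ K := hdg ▸ K.mul_mem_left d hgK
    exact absurd ((Ideal.span_le).2 (Set.singleton_subset_iff.2 hχK)) (not_le_of_gt hK)

theorem stmt_4 {X : Type*} [TopologicalSpace X] [T1Space X] [NormalSpace X]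
    (hG : ∀ p : X, IsGδ ({p} : Set X)) (f : ↥(B1 X)) :
    f ∈ sSup {J : Ideal ↥(B1 X) | IsAtom J} ↔ {x : X | (f : X → ℝ) x ≠ 0}.Finite := by
  constructor
  · intro hf
    have hle : sSup {J : Ideal ↥(B1 X) | IsAtom J} ≤ finSuppIdeal X :=
      sSup_le fun J hJ => atom_le_finSupp hG J hJ
    exact hle hf
  · intro hfin
    set S : Finset X := hfin.toFinset with hS
    set e : X → ↥(B1 X) := fun p =>
      (⟨fun _ => (f : X → ℝ) p, const_mem_B1 _⟩ : ↥(B1 X)) * ⟨chi p, chi_mem_B1 hG p⟩ with he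
    have hfe : f = ∑ p ∈ S, e p := by
      apply Subtype.ext
      have hcoe : ((∑ p ∈ S, e p : ↥(B1 X)) : X → ℝ) = ∑ p ∈ S, ((e p : ↥(B1 X)) : X → ℝ) :=
        map_sum (B1 X).subtype e S
      funext x
      rw [hcoe, Finset.sum_apply]
      have hterm : ∀ p, ((e p : ↥(B1 X)) : X → ℝ) x = (f : X → ℝ) p * chi p x := fun p => rfl
      by_cases hx : x ∈ S
      · rw [Finset.sum_eq_single_of_mem x hx
          (fun p _ hpx => by rw [hterm p, chi_apply_ne (Ne.symm hpx), mul_zero])]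
        rw [hterm x, chi_apply_self, mul_one]
      · have hfx : (f : X → ℝ) x = 0 := by
          by_contra h
          exact hx (by simpa [hS] using h)
        rw [hfx, Finset.sum_eq_zero]
        intro p hp
        have hxp : x ≠ p := fun h => hx (h ▸ hp)
        rw [hterm p, chi_apply_ne hxp, mul_zero]
    rw [hfe]
    apply Ideal.sum_mem
    intro p _
    have hmem : e p ∈ Ideal.span {(⟨chi p, chi_mem_B1 hG p⟩ : ↥(B1 X))} :=
      Ideal.mul_mem_left _ _ (Ideal.subset_span rfl)
    exact Submodule.mem_sSup_of_mem (isAtom_span_chi hG p) hmem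
end

section
/- Let X be a normal space in which every one-point subset is Gδ. Then every element of B₁(X) is either a zero divisor or a unit. -/
open Filter Topology

/-! If `f` has a zero `p`, then `f * χ_{p} = 0`, and `χ_{p}` is Baire one because `{p}` is a
closed Gδ set: writing `{p} = ⋂ Uₙ` with `Uₙ` open, the products of Urysohn functions equal to `1`
at `p` and `0` off `U₀, …, Uₙ` converge pointwise to `χ_{p}`. Otherwise `f` vanishes nowhere and
`1 / f` is the pointwise limit of the continuous functions `Fₙ / (Fₙ² + 1/(n+1))`, where `Fₙ → f`. -/

section

variable {X : Type*} [TopologicalSpace X]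

theorem isBaireOne_indicator_one [NormalSpace X] {s : Set X} (hs : IsClosed s) (hsδ : IsGδ s) :
    IsBaireOne (s.indicator 1) := by
  obtain ⟨U, hUo, rfl⟩ := hsδ.eq_iInter_nat
  have urysohn : ∀ n, ∃ h : C(X, ℝ), Set.EqOn h 0 (U n)ᶜ ∧ Set.EqOn h 1 (⋂ i, U i) := fun n => by
    obtain ⟨h, h0, h1, -⟩ := exists_continuous_zero_one_of_isClosed (hUo n).isClosed_compl hs
      (Set.disjoint_compl_left_iff_subset.2 (Set.iInter_subset U n))
    exact ⟨h, h0, h1⟩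
  choose h h0 h1 using urysohn
  refine ⟨fun n x => ∏ i ∈ Finset.range (n + 1), h i x,
    fun n => continuous_finsetProd _ fun i _ => (h i).continuous, fun x => ?_⟩
  by_cases hx : x ∈ ⋂ i, U i
  · simp only [Set.indicator_of_mem hx, Pi.one_apply, fun i => h1 i hx, Finset.prod_const_one]
    exact tendsto_const_nhds
  · obtain ⟨m, hm⟩ : ∃ m, x ∉ U m := by simpa using hx
    rw [Set.indicator_of_notMem hx]
    refine tendsto_atTop_of_eventually_const (i₀ := m) fun n hn => ?_
    exact Finset.prod_eq_zero (Finset.mem_range.2 (Nat.lt_succ_of_le hn)) (h0 m hm)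

theorem IsBaireOne.inv {f : X → ℝ} (hf : IsBaireOne f) (hne : ∀ x, f x ≠ 0) :
    IsBaireOne f⁻¹ := by
  obtain ⟨F, hFc, hFf⟩ := hf
  have hden : ∀ n x, F n x ^ 2 + 1 / (n + 1 : ℝ) ≠ 0 := fun n x => by positivity
  refine ⟨fun n x => F n x / (F n x ^ 2 + 1 / (n + 1 : ℝ)),
    fun n => (hFc n).div (((hFc n).pow 2).add continuous_const) (hden n), fun x => ?_⟩
  have hden_lim : Tendsto (fun n : ℕ => F n x ^ 2 + 1 / (n + 1 : ℝ)) atTop (𝓝 (f x ^ 2)) := by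
    simpa using ((hFf x).pow 2).add tendsto_one_div_add_atTop_nhds_zero_nat
  have hinv : f x / f x ^ 2 = (f x)⁻¹ := by
    rw [sq, div_mul_eq_div_div, div_self (hne x), one_div]
  rw [Pi.inv_apply, ← hinv]
  exact (hFf x).div hden_lim (pow_ne_zero 2 (hne x))

end

theorem stmt_8 {X : Type*} [TopologicalSpace X] [T1Space X] [NormalSpace X]
    (hG : ∀ p : X, IsGδ ({p} : Set X)) (f : ↥(B1 X)) :
    (∃ g : ↥(B1 X), g ≠ 0 ∧ f * g = 0) ∨ IsUnit f := by
  by_cases h : ∃ p, (f : X → ℝ) p = 0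
  · obtain ⟨p, hp⟩ := h
    refine .inl ⟨⟨chi p, isBaireOne_indicator_one isClosed_singleton (hG p)⟩, fun hzero => ?_, ?_⟩
    · simpa [chi] using congrFun (congrArg Subtype.val hzero) p
    · ext x
      by_cases hx : x = p
      · simp [hx, hp]
      · simp [chi, hx]
  · push Not at h
    refine .inr (IsUnit.of_mul_eq_one (b := ⟨(f : X → ℝ)⁻¹, f.2.inv h⟩) ?_)
    ext x
    exact mul_inv_cancel₀ (h x)
end

section
/- Let X be a normal space in which every one-point subset is Gδ, let f ∈ B₁(X) and let I be the principal ideal generated by f. If ⋂ Z[I] is a finite set B, then the annihilator Ann(I) is the principal ideal generated by the characteristic function χ_B, and χ_B satisfies χ_Bʳ = χ_B for every positive integer r. -/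
open Filter Topology

-- closed Gδ set in a normal space is a zero set
lemma exists_cont_zeroset {X : Type*} [TopologicalSpace X] [NormalSpace X] {B : Set X}
    (hBc : IsClosed B) (hBg : IsGδ B) :
    ∃ φ : X → ℝ, Continuous φ ∧ (∀ x, 0 ≤ φ x) ∧ ∀ x, φ x = 0 ↔ x ∈ B := by
  obtain ⟨U, Uopen, hU⟩ := hBg.eq_iInter_nat
  have hA : ∀ n, ∃ f : C(X, ℝ), Set.EqOn f 0 B ∧ Set.EqOn f 1 (U n)ᶜ ∧
      ∀ x, f x ∈ Set.Icc (0:ℝ) 1 := by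
    intro n
    refine exists_continuous_zero_one_of_isClosed hBc (Uopen n).isClosed_compl ?_
    rw [Set.disjoint_left]
    intro x hx hx'
    exact hx' (by rw [hU] at hx; exact Set.mem_iInter.mp hx n)
  choose F hF0 hF1 hFr using hA
  refine ⟨fun x => ∑' n, (1/2 : ℝ)^n * F n x, ?_, ?_, ?_⟩
  · refine continuous_tsum (fun n => continuous_const.mul (F n).continuous)
      summable_geometric_two (fun n x => ?_)
    rw [norm_mul]
    have h1 : |F n x| ≤ 1 := abs_le.mpr ⟨by linarith [(hFr n x).1], (hFr n x).2⟩
    calc ‖(1/2 : ℝ)^n‖ * ‖F n x‖ ≤ ‖(1/2 : ℝ)^n‖ * 1 := by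
          exact mul_le_mul_of_nonneg_left h1 (norm_nonneg _)
      _ = (1/2 : ℝ)^n := by
          rw [mul_one, norm_pow, Real.norm_eq_abs, abs_of_nonneg]; norm_num
  · intro x
    exact tsum_nonneg fun n => mul_nonneg (by positivity) (hFr n x).1
  · intro x
    constructor
    · intro h
      by_contra hx
      rw [hU, Set.mem_iInter] at hx
      push_neg at hx
      obtain ⟨n, hn⟩ := hx
      have hsum : Summable (fun n => (1/2 : ℝ)^n * F n x) := by
        refine Summable.of_nonneg_of_le (fun n => mul_nonneg (by positivity) (hFr n x).1)
          (fun n => ?_) summable_geometric_two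
        calc (1/2 : ℝ)^n * F n x ≤ (1/2 : ℝ)^n * 1 :=
              mul_le_mul_of_nonneg_left (hFr n x).2 (by positivity)
          _ = (1/2 : ℝ)^n := mul_one _
      have hle : (1/2 : ℝ)^n * F n x ≤ ∑' m, (1/2 : ℝ)^m * F m x :=
        Summable.le_tsum hsum n (fun m _ => mul_nonneg (by positivity) (hFr m x).1)
      have h1 : F n x = 1 := hF1 n hn
      rw [h1, mul_one] at hle
      simp only at h
      rw [h] at hle
      have : (0:ℝ) < (1/2 : ℝ)^n := by positivity
      linarith
    · intro hx
      have h0 : ∀ n, F n x = 0 := fun n => hF0 n hx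
      simp only
      have : (fun n => (1/2 : ℝ)^n * F n x) = fun _ => 0 := by
        funext n; rw [h0 n, mul_zero]
      rw [this, tsum_zero]

lemma indicator_baireOne {X : Type*} [TopologicalSpace X] {B : Set X}
    {φ : X → ℝ} (hφ : Continuous φ) (hnn : ∀ x, 0 ≤ φ x) (hz : ∀ x, φ x = 0 ↔ x ∈ B) :
    ∃ F : ℕ → X → ℝ, (∀ n, Continuous (F n)) ∧
      ∀ x, Filter.Tendsto (fun n => F n x) Filter.atTop
        (nhds (Set.indicator B (fun _ => (1:ℝ)) x)) := by
  refine ⟨fun n x => max (1 - (n:ℝ) * φ x) 0,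
    fun n => (continuous_const.sub (continuous_const.mul hφ)).max continuous_const, fun x => ?_⟩
  by_cases hx : x ∈ B
  · have h0 : φ x = 0 := (hz x).mpr hx
    have : (fun n : ℕ => max (1 - (n:ℝ) * φ x) 0) = fun _ => (1:ℝ) := by
      funext n; rw [h0, mul_zero, sub_zero]; exact max_eq_left zero_le_one
    rw [this, Set.indicator_of_mem hx]
    exact tendsto_const_nhds
  · have h0 : 0 < φ x := lt_of_le_of_ne (hnn x) (fun h => hx ((hz x).mp h.symm))
    rw [Set.indicator_of_notMem hx]
    refine Tendsto.congr' ?_ tendsto_const_nhds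
    filter_upwards [eventually_ge_atTop ⌈(φ x)⁻¹⌉₊] with n hn
    have h1 : (φ x)⁻¹ ≤ (n:ℝ) := le_trans (Nat.le_ceil _) (by exact_mod_cast hn)
    have h2 : 1 ≤ (n:ℝ) * φ x := by
      rw [← inv_mul_cancel₀ (ne_of_gt h0)]
      exact mul_le_mul_of_nonneg_right h1 h0.le
    exact (max_eq_right (by linarith)).symm

theorem stmt_10 {X : Type*} [TopologicalSpace X] [T1Space X] [NormalSpace X]
    (hG : ∀ p : X, IsGδ ({p} : Set X)) (f : ↥(B1 X))
    (I : Ideal ↥(B1 X)) (hI : I = Ideal.span {f})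
    (B : Set X) (hB : B = ⋂ g ∈ I, zset g) (hBfin : B.Finite) :
    ∃ g : ↥(B1 X), (g : X → ℝ) = Set.indicator B (fun _ => 1) ∧
      Submodule.annihilator I = Ideal.span {g} ∧ ∀ r : ℕ, 0 < r → g ^ r = g := by
  have hfI : f ∈ I := hI ▸ Ideal.subset_span rfl
  have hBz : B = zset f := by
    apply Set.Subset.antisymm
    · rw [hB]; exact Set.iInter_subset_of_subset f (Set.iInter_subset _ hfI)
    · rw [hB]
      intro x hx
      refine Set.mem_iInter.mpr fun k => Set.mem_iInter.mpr fun hk => ?_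
      rw [hI, Ideal.mem_span_singleton'] at hk
      obtain ⟨c, rfl⟩ := hk
      show ((c * f : ↥(B1 X)) : X → ℝ) x = 0
      have : ((c * f : ↥(B1 X)) : X → ℝ) x = (c : X → ℝ) x * (f : X → ℝ) x := rfl
      rw [this, hx, mul_zero]
  have hfB : ∀ x ∈ B, (f : X → ℝ) x = 0 := fun x hx => by rw [hBz] at hx; exact hx
  have hBclosed : IsClosed B := hBfin.isClosed
  have hBgdelta : IsGδ B := by
    have := IsGδ.biUnion hBfin (fun p (_ : p ∈ B) => hG p)
    rwa [Set.biUnion_of_singleton] at this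
  obtain ⟨φ, hφc, hφnn, hφz⟩ := exists_cont_zeroset hBclosed hBgdelta
  have hbaire : IsBaireOne (Set.indicator B (fun _ => (1:ℝ))) :=
    indicator_baireOne hφc hφnn hφz
  refine ⟨⟨Set.indicator B (fun _ => (1:ℝ)), hbaire⟩, rfl, ?_, ?_⟩
  · set g : ↥(B1 X) := ⟨Set.indicator B (fun _ => (1:ℝ)), hbaire⟩ with hg
    have hgx : ∀ x ∉ B, (g : X → ℝ) x = 0 := fun x hx => by
      show Set.indicator B (fun _ => (1:ℝ)) x = 0
      exact Set.indicator_of_notMem hx _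
    have hgx1 : ∀ x ∈ B, (g : X → ℝ) x = 1 := fun x hx => by
      show Set.indicator B (fun _ => (1:ℝ)) x = 1
      exact Set.indicator_of_mem hx _
    apply le_antisymm
    · intro h hh
      have hhf : h * f = 0 := by
        have := Submodule.mem_annihilator.mp hh f hfI
        rwa [smul_eq_mul] at this
      have hh0 : ∀ x ∉ B, (h : X → ℝ) x = 0 := by
        intro x hx
        have hfx : (f : X → ℝ) x ≠ 0 := fun h0 => hx (hBz ▸ h0)
        have : (h : X → ℝ) x * (f : X → ℝ) x = 0 := by
          have := congrFun (congrArg (fun k : ↥(B1 X) => (k : X → ℝ)) hhf) x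
          exact this
        exact (mul_eq_zero.mp this).resolve_right hfx
      rw [Ideal.mem_span_singleton']
      refine ⟨h, ?_⟩
      apply Subtype.ext
      funext x
      show (h : X → ℝ) x * (g : X → ℝ) x = (h : X → ℝ) x
      by_cases hx : x ∈ B
      · rw [hgx1 x hx, mul_one]
      · rw [hh0 x hx, zero_mul]
    · rw [Ideal.span_le]
      rintro _ rfl
      rw [SetLike.mem_coe, Submodule.mem_annihilator]
      intro k hk
      rw [hI, Ideal.mem_span_singleton'] at hk
      obtain ⟨c, rfl⟩ := hk
      rw [smul_eq_mul]
      apply Subtype.ext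
      funext x
      show (g : X → ℝ) x * ((c : X → ℝ) x * (f : X → ℝ) x) = 0
      by_cases hx : x ∈ B
      · rw [hfB x hx, mul_zero, mul_zero]
      · rw [hgx x hx, zero_mul]
  · intro r hr
    apply Subtype.ext
    funext x
    have hpow : ∀ m : ℕ, ((⟨Set.indicator B (fun _ => (1:ℝ)), hbaire⟩ ^ m : ↥(B1 X)) : X → ℝ) x
        = (Set.indicator B (fun _ => (1:ℝ)) x) ^ m := by
      intro m
      induction m with
      | zero => rfl
      | succ n ih =>
        rw [pow_succ, pow_succ]
        have h2 : ((⟨Set.indicator B (fun _ => (1:ℝ)), hbaire⟩ ^ n *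
            ⟨Set.indicator B (fun _ => (1:ℝ)), hbaire⟩ : ↥(B1 X)) : X → ℝ) x
            = ((⟨Set.indicator B (fun _ => (1:ℝ)), hbaire⟩ ^ n : ↥(B1 X)) : X → ℝ) x *
              Set.indicator B (fun _ => (1:ℝ)) x := rfl
        rw [h2, ih]
    rw [hpow r]
    show (Set.indicator B (fun _ => (1:ℝ)) x) ^ r = Set.indicator B (fun _ => (1:ℝ)) x
    by_cases hx : x ∈ B
    · rw [Set.indicator_of_mem hx, one_pow]
    · rw [Set.indicator_of_notMem hx, zero_pow hr.ne']
end

section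
/- Let X be a normal space in which every one-point subset is Gδ. Then every countable subset A of X is a cozero set in B₁(X), i.e., X \ A = Z(f) for some f ∈ B₁(X). -/
open Filter Topology

/-!
Enumerate `A = {u k}`. A closed Gδ set `s = ⋂ n, U n` in a normal space has its indicator as a
pointwise limit of continuous `[0,1]`-valued functions: one minus Urysohn functions separating `s`
from `(U 0 ∩ ⋯ ∩ U n)ᶜ`. The function `∑ k, 2⁻ᵏ χ_{u k}` vanishes exactly off `A`, and it is Baire
one because the diagonal sums `∑ k < n, 2⁻ᵏ H k n` of the approximants converge to it by dominated
convergence.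
-/

open Set

section

variable {X : Type*}

theorem tsum_geometric_mul_chi_eq_zero_iff (u : ℕ → X) (x : X) :
    ∑' k, (1 / 2 : ℝ) ^ k * chi (u k) x = 0 ↔ x ∉ range u := by
  constructor
  · rintro hsum ⟨k, rfl⟩
    have hchi_nonneg (j : ℕ) : 0 ≤ chi (u j) (u k) := indicator_nonneg (fun _ _ => zero_le_one) _
    have hchi_le (j : ℕ) : chi (u j) (u k) ≤ 1 := indicator_le_self' (fun _ _ => zero_le_one) _
    have hsummable : Summable fun j => (1 / 2 : ℝ) ^ j * chi (u j) (u k) :=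
      summable_geometric_two.of_nonneg_of_le (fun j => mul_nonneg (by positivity) (hchi_nonneg j))
        fun j => mul_le_of_le_one_right (by positivity) (hchi_le j)
    refine (hsummable.tsum_pos (fun j => mul_nonneg (by positivity) (hchi_nonneg j)) k ?_).ne' hsum
    simp [chi]
  · intro hx
    have (k : ℕ) : chi (u k) x = 0 := indicator_of_notMem (fun h => hx ⟨k, h.symm⟩) _
    simp [this]

variable [TopologicalSpace X]

theorem isBaireOne_tsum_of_tendsto {b : ℕ → ℝ} (hb : Summable b) {H : ℕ → ℕ → X → ℝ}
    {h : ℕ → X → ℝ} (hH : ∀ k n, Continuous (H k n)) (hHb : ∀ k n x, ‖H k n x‖ ≤ b k)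
    (hHh : ∀ k x, Tendsto (fun n => H k n x) atTop (𝓝 (h k x))) :
    IsBaireOne fun x => ∑' k, h k x := by
  refine ⟨fun n x => ∑ k ∈ Finset.range n, H k n x,
    fun n => continuous_finsetSum _ fun k _ => hH k n, fun x => ?_⟩
  refine (tendsto_tsum_of_dominated_convergence hb (fun k => ?_)
    (.of_forall fun n k =>
      (norm_indicator_le_norm_self (fun j => H j n x) k).trans (hHb k n x))).congr
    fun n => (sum_eq_tsum_indicator (fun k => H k n x) _).symm
  refine (hHh k x).congr' ?_
  filter_upwards [eventually_gt_atTop k] with n hn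
  simp [hn]

theorem exists_tendsto_indicator_of_isClosed_of_isGδ [NormalSpace X] {s : Set X}
    (hs : IsClosed s) (hs' : IsGδ s) :
    ∃ H : ℕ → X → ℝ, (∀ n, Continuous (H n)) ∧ (∀ n x, H n x ∈ Icc (0 : ℝ) 1) ∧
      ∀ x, Tendsto (fun n => H n x) atTop (𝓝 (s.indicator 1 x)) := by
  obtain ⟨U, hU, rfl⟩ := hs'.eq_iInter_nat
  have hdisj (n : ℕ) : Disjoint (⋂ i, U i) (⋂ i ∈ Finset.range (n + 1), U i)ᶜ :=
    disjoint_compl_right_iff_subset.mpr fun x hx => mem_iInter₂.mpr fun i _ => mem_iInter.mp hx i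
  have hclosed (n : ℕ) : IsClosed (⋂ i ∈ Finset.range (n + 1), U i)ᶜ :=
    (isOpen_biInter_finset fun i _ => hU i).isClosed_compl
  choose g hg0 hg1 hg01 using fun n =>
    exists_continuous_zero_one_of_isClosed hs (hclosed n) (hdisj n)
  refine ⟨fun n x => 1 - g n x, fun n => continuous_const.sub (g n).continuous,
    fun n x => ⟨sub_nonneg.mpr (hg01 n x).2, sub_le_self _ (hg01 n x).1⟩, fun x => ?_⟩
  by_cases hx : x ∈ ⋂ i, U i
  · simp [indicator_of_mem hx, hg0 _ hx]
  · obtain ⟨i, hi⟩ : ∃ i, x ∉ U i := by simpa using hx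
    rw [indicator_of_notMem hx]
    refine tendsto_atTop_of_eventually_const (i₀ := i) fun n hn => ?_
    have : x ∈ (⋂ j ∈ Finset.range (n + 1), U j)ᶜ := by
      simpa using ⟨i, by omega, hi⟩
    simp [hg1 n this]

end

theorem stmt_11 {X : Type*} [TopologicalSpace X] [T1Space X] [NormalSpace X]
    (hG : ∀ p : X, IsGδ ({p} : Set X)) (A : Set X) (hA : A.Countable) :
    ∃ f : ↥(B1 X), zset f = Aᶜ := by
  rcases A.eq_empty_or_nonempty with rfl | hne
  · exact ⟨0, by ext; simp [zset]⟩
  obtain ⟨u, rfl⟩ := hA.exists_eq_range hne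
  choose H hH hH01 hHχ using fun k =>
    exists_tendsto_indicator_of_isClosed_of_isGδ isClosed_singleton (hG (u k))
  have hf : IsBaireOne fun x => ∑' k, (1 / 2 : ℝ) ^ k * chi (u k) x :=
    isBaireOne_tsum_of_tendsto summable_geometric_two
      (H := fun k n x => (1 / 2 : ℝ) ^ k * H k n x)
      (fun k n => continuous_const.mul (hH k n))
      (fun k n x => by
        rw [Real.norm_eq_abs, abs_of_nonneg (mul_nonneg (by positivity) (hH01 k n x).1)]
        exact mul_le_of_le_one_right (by positivity) (hH01 k n x).2)
      (fun k x => (hHχ k x).const_mul _)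
  exact ⟨⟨_, hf⟩, by ext x; exact tsum_geometric_mul_chi_eq_zero_iff u x⟩
end

section
/- Suppose X is a nodef space (every nowhere dense subset is Fσ) that is perfectly normal. Then every function f : X → ℝ that is continuous on some dense open subset of X is a Baire one function, i.e., T'(X) ⊆ B₁(X). -/
open Filter Topology

lemma exists_cont_ext {X : Type*} [TopologicalSpace X] [NormalSpace X] {T : Set X}
    (hT : IsClosed T) {g : X → ℝ} (hg : ContinuousOn g T) :
    ∃ G : X → ℝ, Continuous G ∧ ∀ x ∈ T, G x = g x := by
  obtain ⟨Gc, hGc⟩ := ContinuousMap.exists_restrict_eq hT ⟨T.restrict g, hg.restrict⟩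
  exact ⟨Gc, Gc.continuous, fun x hx => ContinuousMap.congr_fun hGc ⟨x, hx⟩⟩

lemma geom_tail_le (P n : ℕ) : ∑ p ∈ Finset.Ico P n, (2⁻¹ : ℝ) ^ p ≤ 2 * 2⁻¹ ^ P := by
  rw [Finset.sum_Ico_eq_sum_range]
  have h : ∀ i ∈ Finset.range (n - P), (2⁻¹ : ℝ) ^ (P + i) = 2⁻¹ ^ P * 2⁻¹ ^ i := by
    intro i _; rw [pow_add]
  rw [Finset.sum_congr rfl h, ← Finset.mul_sum]
  calc (2⁻¹ : ℝ) ^ P * ∑ i ∈ Finset.range (n - P), (2⁻¹ : ℝ) ^ i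
      ≤ 2⁻¹ ^ P * 2 := by
        refine mul_le_mul_of_nonneg_left ?_ (by positivity)
        simpa [one_div] using sum_geometric_two_le (n - P)
    _ = 2 * 2⁻¹ ^ P := by ring

theorem stmt_13 {X : Type*} [TopologicalSpace X] [T1Space X] [PerfectlyNormalSpace X]
    (hnodef : ∀ s : Set X, IsNowhereDense s → IsFsigma s)
    (f : X → ℝ) (hf : ∃ D : Set X, IsOpen D ∧ Dense D ∧ ContinuousOn f D) :
    IsBaireOne f := by
  classical
  obtain ⟨D, hDo, hDd, hfD⟩ := hf
  set E : Set X := Dᶜ with hEdef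
  have hEc : IsClosed E := hDo.isClosed_compl
  have hintE : interior E = ∅ := by
    rw [hEdef, interior_compl, hDd.closure_eq, Set.compl_univ]
  have hsubnd : ∀ s : Set X, s ⊆ E → IsNowhereDense s := by
    intro s hs
    have h1 : interior (closure s) ⊆ interior E :=
      interior_mono (closure_minimal hs hEc)
    rw [hintE] at h1
    exact Set.subset_empty_iff.mp h1
  -- exhaustion of D by closed sets
  obtain ⟨U, hUo, hUeq⟩ := (PerfectlyNormalSpace.closed_gdelta hEc).eq_iInter_nat
  set DD : ℕ → Set X := fun m => ⋃ i ∈ Finset.range (m + 1), (U i)ᶜ with hDDdef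
  have hDDc : ∀ m, IsClosed (DD m) :=
    fun m => isClosed_biUnion_finset fun i _ => (hUo i).isClosed_compl
  have hDDsub : ∀ m, DD m ⊆ D := by
    intro m x hx
    by_contra hxD
    have hxE : x ∈ ⋂ n, U n := by rw [← hUeq]; exact hxD
    simp only [hDDdef, Set.mem_iUnion, Finset.mem_range, Set.mem_compl_iff] at hx
    obtain ⟨i, _, hxi⟩ := hx
    exact hxi (Set.mem_iInter.mp hxE i)
  have hDDmono : ∀ {m m'}, m ≤ m' → DD m ⊆ DD m' := by
    intro m m' hmm x hx
    simp only [hDDdef, Set.mem_iUnion, Finset.mem_range] at hx ⊢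
    obtain ⟨i, hi, hxi⟩ := hx
    exact ⟨i, by omega, hxi⟩
  have hDDcov : ∀ x ∈ D, ∃ m, x ∈ DD m := by
    intro x hx
    have : ¬ x ∈ ⋂ n, U n := by rw [← hUeq]; exact fun h => h hx
    rw [Set.mem_iInter] at this
    push_neg at this
    obtain ⟨i, hi⟩ := this
    exact ⟨i, by
      simp only [hDDdef, Set.mem_iUnion, Finset.mem_range, Set.mem_compl_iff]
      exact ⟨i, by omega, hi⟩⟩
  -- approximation functions
  set fp : ℕ → X → ℝ := fun p x => if x ∈ D then f x else (⌊f x * 2 ^ p⌋ : ℝ) / 2 ^ p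
    with hfpdef
  have hfp_close : ∀ p x, |fp p x - f x| ≤ (2⁻¹ : ℝ) ^ p := by
    intro p x
    by_cases hx : x ∈ D
    · simp [hfpdef, hx, pow_nonneg]
    · have hc : (0:ℝ) < 2 ^ p := by positivity
      have h1 : (⌊f x * 2 ^ p⌋ : ℝ) ≤ f x * 2 ^ p := Int.floor_le _
      have h2 : f x * 2 ^ p - 1 < (⌊f x * 2 ^ p⌋ : ℝ) := Int.sub_one_lt_floor _
      have heq : fp p x - f x = ((⌊f x * 2 ^ p⌋ : ℝ) - f x * 2 ^ p) / 2 ^ p := by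
        simp only [hfpdef, hx, if_false]
        field_simp
      have hone : (2⁻¹:ℝ) ^ p * 2 ^ p = 1 := by
        rw [inv_pow, inv_mul_cancel₀ (ne_of_gt hc)]
      rw [heq, abs_div, abs_of_pos hc, div_le_iff₀ hc, hone, abs_le]
      constructor <;> linarith
  -- the pieces of E
  have hSfs : ∀ (p : ℕ) (k : ℤ), IsFsigma {x | x ∈ E ∧ ⌊f x * 2 ^ p⌋ = k} :=
    fun p k => hnodef _ (hsubnd _ (fun x hx => hx.1))
  choose C hCc hCeq using hSfs
  set C2 : ℕ → ℤ → ℕ → Set X := fun p k m => ⋃ i ∈ Finset.range (m + 1), C p k i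
    with hC2def
  have hC2c : ∀ p k m, IsClosed (C2 p k m) :=
    fun p k m => isClosed_biUnion_finset fun i _ => hCc p k i
  have hC2sub : ∀ p k m, C2 p k m ⊆ {x | x ∈ E ∧ ⌊f x * 2 ^ p⌋ = k} := by
    intro p k m x hx
    simp only [hC2def, Set.mem_iUnion, Finset.mem_range] at hx
    obtain ⟨i, _, hxi⟩ := hx
    rw [hCeq p k]
    exact Set.mem_iUnion.mpr ⟨i, hxi⟩
  set T : ℕ → ℕ → Set X := fun p m =>
      DD m ∪ ⋃ k ∈ Finset.Icc (-(m:ℤ)) (m:ℤ), C2 p k m with hTdef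
  have hTc : ∀ p m, IsClosed (T p m) :=
    fun p m => (hDDc m).union (isClosed_biUnion_finset fun k _ => hC2c p k m)
  -- fp p is continuous on T p m
  have hTcont : ∀ p m, ContinuousOn (fp p) (T p m) := by
    intro p m x hx
    rcases hx with hxD | hxC
    · have hxD' : x ∈ D := hDDsub m hxD
      have hca : ContinuousAt (fp p) x := by
        refine (hfD.continuousAt (hDo.mem_nhds hxD')).congr ?_
        filter_upwards [hDo.mem_nhds hxD'] with y hy
        simp [hfpdef, hy]
      exact hca.continuousWithinAt
    · simp only [Set.mem_iUnion] at hxC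
      obtain ⟨k, hk, hxk⟩ := hxC
      have hxS := hC2sub p k m hxk
      have hxE : x ∈ E := hxS.1
      set W : Set X := (DD m ∪ ⋃ k' ∈ (Finset.Icc (-(m:ℤ)) (m:ℤ)).erase k, C2 p k' m)ᶜ
        with hWdef
      have hWo : IsOpen W :=
        ((hDDc m).union (isClosed_biUnion_finset fun k' _ => hC2c p k' m)).isOpen_compl
      have hxW : x ∈ W := by
        simp only [hWdef, Set.mem_compl_iff, Set.mem_union, Set.mem_iUnion, not_or,
          not_exists]
        constructor
        · exact fun h => hxE (hDDsub m h)
        · intro k' hk' hxk'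
          have := (hC2sub p k' m hxk').2
          have := hxS.2
          have : k' = k := by omega
          exact (Finset.mem_erase.mp hk').1 this
      have heq : fp p =ᶠ[nhdsWithin x (T p m)] fun _ => (k : ℝ) / 2 ^ p := by
        filter_upwards [self_mem_nhdsWithin,
          mem_nhdsWithin_of_mem_nhds (hWo.mem_nhds hxW)] with y hyT hyW
        have hyC : y ∈ C2 p k m := by
          simp only [hWdef, Set.mem_compl_iff, Set.mem_union, Set.mem_iUnion, not_or,
            not_exists] at hyW
          rcases hyT with h | h
          · exact absurd h hyW.1
          · simp only [Set.mem_iUnion] at h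
            obtain ⟨k', hk', hyk'⟩ := h
            rcases eq_or_ne k' k with rfl | hne
            · exact hyk'
            · exact absurd hyk' (hyW.2 k' (Finset.mem_erase.mpr ⟨hne, hk'⟩))
        have hyS := hC2sub p k m hyC
        have hyD : ¬ y ∈ D := hyS.1
        simp [hfpdef, hyD, hyS.2]
      refine ContinuousWithinAt.congr_of_eventuallyEq ?_ heq ?_
      · exact continuousWithinAt_const
      · simp [hfpdef, (show ¬ x ∈ D from hxE), hxS.2]
  -- Tietze extensions
  have hGex : ∀ p m, ∃ G : X → ℝ, Continuous G ∧ ∀ x ∈ T p m, G x = fp p x :=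
    fun p m => exists_cont_ext (hTc p m) (hTcont p m)
  choose G hGcont hGeq using hGex
  -- eventual membership
  have hTev : ∀ p x, ∀ᶠ m in atTop, x ∈ T p m := by
    intro p x
    by_cases hx : x ∈ D
    · obtain ⟨m₀, hm₀⟩ := hDDcov x hx
      rw [eventually_atTop]
      exact ⟨m₀, fun m hm => Or.inl (hDDmono hm hm₀)⟩
    · have hxE : x ∈ E := hx
      set k : ℤ := ⌊f x * 2 ^ p⌋ with hkdef
      have hxS : x ∈ {y | y ∈ E ∧ ⌊f y * 2 ^ p⌋ = k} := ⟨hxE, rfl⟩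
      rw [hCeq p k, Set.mem_iUnion] at hxS
      obtain ⟨i₀, hi₀⟩ := hxS
      rw [eventually_atTop]
      refine ⟨max i₀ k.natAbs, fun m hm => Or.inr ?_⟩
      have h1 : i₀ ≤ m := le_trans (le_max_left _ _) hm
      have h2 : k.natAbs ≤ m := le_trans (le_max_right _ _) hm
      simp only [Set.mem_iUnion]
      refine ⟨k, Finset.mem_Icc.mpr ⟨by omega, by omega⟩, ?_⟩
      simp only [hC2def, Set.mem_iUnion, Finset.mem_range]
      exact ⟨i₀, by omega, hi₀⟩
  have hGev : ∀ p x, ∀ᶠ m in atTop, G p m x = fp p x := by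
    intro p x
    filter_upwards [hTev p x] with m hm using hGeq p m x hm
  -- clamped differences
  set b : ℕ → ℝ := fun p => (2⁻¹ : ℝ) ^ p + (2⁻¹ : ℝ) ^ (p + 1) with hbdef
  have hbpos : ∀ p, 0 ≤ b p := fun p => by positivity
  set h : ℕ → X → ℝ := fun p x => fp (p + 1) x - fp p x with hhdef
  have hhb : ∀ p x, |h p x| ≤ b p := by
    intro p x
    have h1 := hfp_close (p + 1) x
    have h2 := hfp_close p x
    have heq : h p x = (fp (p+1) x - f x) - (fp p x - f x) := by
      simp only [hhdef]; ring
    rw [heq]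
    calc |(fp (p+1) x - f x) - (fp p x - f x)|
        ≤ |fp (p+1) x - f x| + |fp p x - f x| := abs_sub _ _
      _ ≤ (2⁻¹:ℝ) ^ (p+1) + (2⁻¹:ℝ) ^ p := add_le_add h1 h2
      _ = b p := by rw [hbdef]; ring
  set H : ℕ → ℕ → X → ℝ := fun p m x =>
      max (-(b p)) (min (b p) (G (p + 1) m x - G p m x)) with hHdef
  have hHcont : ∀ p m, Continuous (H p m) := by
    intro p m
    exact continuous_const.max (continuous_const.min ((hGcont (p+1) m).sub (hGcont p m)))
  have hHb : ∀ p m x, |H p m x| ≤ b p := by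
    intro p m x
    rw [abs_le]
    constructor
    · exact le_max_left _ _
    · exact max_le (neg_le_self (hbpos p)) (min_le_left _ _)
  have hHev : ∀ p x, ∀ᶠ m in atTop, H p m x = h p x := by
    intro p x
    filter_upwards [hGev (p+1) x, hGev p x] with m h1 h2
    have hb := hhb p x
    rw [abs_le] at hb
    simp only [hHdef, h1, h2, ← hhdef]
    rw [min_eq_right hb.2, max_eq_right hb.1]
  -- the approximating sequence
  refine ⟨fun n x => G 0 n x + ∑ p ∈ Finset.range n, H p n x, ?_, ?_⟩
  · intro n
    exact (hGcont 0 n).add (continuous_finset_sum _ fun p _ => hHcont p n)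
  · intro x
    rw [Metric.tendsto_atTop]
    intro ε hε
    obtain ⟨P, hP⟩ := exists_pow_lt_of_lt_one (by linarith : (0:ℝ) < ε / 9)
      (by norm_num : (2⁻¹ : ℝ) < 1)
    obtain ⟨N₀, hN₀⟩ := eventually_atTop.mp (hGev 0 x)
    have hN1 : ∃ N₁, ∀ p < P, ∀ m ≥ N₁, H p m x = h p x := by
      choose Np hNp using fun p => eventually_atTop.mp (hHev p x)
      exact ⟨(Finset.range P).sup Np, fun p hp m hm =>
        hNp p m (le_trans (Finset.le_sup (Finset.mem_range.mpr hp)) hm)⟩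
    obtain ⟨N₁, hN₁⟩ := hN1
    refine ⟨max (max N₀ N₁) P, fun n hn => ?_⟩
    have hnN₀ : N₀ ≤ n := le_trans (le_trans (le_max_left _ _) (le_max_left _ _)) hn
    have hnN₁ : N₁ ≤ n := le_trans (le_trans (le_max_right _ _) (le_max_left _ _)) hn
    have hnP : P ≤ n := le_trans (le_max_right _ _) hn
    rw [Real.dist_eq]
    have tel : ∑ p ∈ Finset.range n, h p x = fp n x - fp 0 x := by
      simp only [hhdef]
      exact Finset.sum_range_sub (fun p => fp p x) n
    have key : G 0 n x + ∑ p ∈ Finset.range n, H p n x - f x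
        = (G 0 n x - fp 0 x) + (∑ p ∈ Finset.range n, (H p n x - h p x))
          + (fp n x - f x) := by
      rw [Finset.sum_sub_distrib, tel]; ring
    rw [key, hN₀ n hnN₀, sub_self, zero_add]
    have hsplit : ∑ p ∈ Finset.range n, (H p n x - h p x)
        = ∑ p ∈ Finset.Ico P n, (H p n x - h p x) := by
      rw [Finset.range_eq_Ico, ← Finset.sum_Ico_consecutive _ (Nat.zero_le P) hnP]
      rw [Finset.sum_eq_zero (fun p hp => by
        rw [hN₁ p (by simpa using (Finset.mem_Ico.mp hp).2) n hnN₁, sub_self]), zero_add]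
    rw [hsplit]
    have hsum : |∑ p ∈ Finset.Ico P n, (H p n x - h p x)| ≤ 8 * (2⁻¹:ℝ) ^ P := by
      calc |∑ p ∈ Finset.Ico P n, (H p n x - h p x)|
          ≤ ∑ p ∈ Finset.Ico P n, |H p n x - h p x| := Finset.abs_sum_le_sum_abs _ _
        _ ≤ ∑ p ∈ Finset.Ico P n, 4 * (2⁻¹:ℝ) ^ p := by
            refine Finset.sum_le_sum fun p _ => ?_
            have h1 := hHb p n x
            have h2 := hhb p x
            have hb2 : b p ≤ 2 * (2⁻¹:ℝ) ^ p := by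
              rw [hbdef]
              have : (2⁻¹:ℝ) ^ (p+1) ≤ (2⁻¹:ℝ) ^ p :=
                pow_le_pow_of_le_one (by norm_num) (by norm_num) (by omega)
              linarith
            calc |H p n x - h p x| ≤ |H p n x| + |h p x| := abs_sub _ _
              _ ≤ b p + b p := add_le_add h1 h2
              _ ≤ 4 * (2⁻¹:ℝ) ^ p := by linarith
        _ = 4 * ∑ p ∈ Finset.Ico P n, (2⁻¹:ℝ) ^ p := by rw [Finset.mul_sum]
        _ ≤ 4 * (2 * (2⁻¹:ℝ) ^ P) := by
            refine mul_le_mul_of_nonneg_left (geom_tail_le P n) (by norm_num)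
        _ = 8 * (2⁻¹:ℝ) ^ P := by ring
    have hlast : |fp n x - f x| ≤ (2⁻¹:ℝ) ^ P := by
      refine le_trans (hfp_close n x) ?_
      exact pow_le_pow_of_le_one (by norm_num) (by norm_num) hnP
    calc |∑ p ∈ Finset.Ico P n, (H p n x - h p x) + (fp n x - f x)|
        ≤ |∑ p ∈ Finset.Ico P n, (H p n x - h p x)| + |fp n x - f x| := abs_add_le _ _
      _ ≤ 8 * (2⁻¹:ℝ) ^ P + (2⁻¹:ℝ) ^ P := add_le_add hsum hlast
      _ = 9 * (2⁻¹:ℝ) ^ P := by ring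
      _ < 9 * (ε / 9) := by linarith [hP]
      _ = ε := by ring
end

section
/- Let X be a linearly ordered set with the order topology that is first countable. Then every real-valued function on X that is continuous except on a finite set is a Baire one function, i.e., C(X)_F ⊆ B₁(X). -/
open Filter Topology

theorem stmt_14 {X : Type*} [LinearOrder X] [TopologicalSpace X] [OrderTopology X]
    [FirstCountableTopology X]
    (f : X → ℝ) (hf : {x : X | ¬ ContinuousAt f x}.Finite) :
    IsBaireOne f := by
  classical
  -- antitone neighborhood bases
  have hb : ∀ p : X, ∃ V : ℕ → Set X, (𝓝 p).HasAntitoneBasis V :=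
    fun p => (𝓝 p).exists_antitone_basis
  choose V hV using hb
  set W : X → ℕ → Set X := fun p n => interior (V p n) with hWdef
  have hWmem : ∀ p n, W p n ∈ 𝓝 p := fun p n =>
    interior_mem_nhds.mpr ((hV p).1.mem_of_mem trivial)
  have hWopen : ∀ p n, IsOpen (W p n) := fun p n => isOpen_interior
  have hWp : ∀ p n, p ∈ W p n := fun p n => mem_of_mem_nhds (hWmem p n)
  -- escape: any x ≠ p eventually leaves W p n
  have hesc : ∀ p x, x ≠ p → ∀ᶠ n in atTop, x ∉ W p n := by
    intro p x hx
    have hxc : ({x}ᶜ : Set X) ∈ 𝓝 p :=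
      (isOpen_compl_singleton).mem_nhds (by simpa using (Ne.symm hx))
    obtain ⟨N, -, hN⟩ := (hV p).1.mem_iff.mp hxc
    filter_upwards [eventually_ge_atTop N] with n hn hmem
    exact hN ((hV p).2 hn (interior_subset hmem)) rfl
  -- closed neighborhoods inside W
  have hC : ∀ p n, ∃ C : Set X, IsClosed C ∧ C ∈ 𝓝 p ∧ C ⊆ W p n := by
    intro p n
    obtain ⟨C, hCn, hCc, hCs⟩ := exists_mem_nhds_isClosed_subset (hWmem p n)
    exact ⟨C, hCc, hCn, hCs⟩
  choose C hCclosed hCnhds hCsub using hC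
  -- g p n : 0 on C p n, 1 outside W p n
  have hg : ∀ p n, ∃ g : C(X, ℝ), Set.EqOn g 0 (C p n) ∧ Set.EqOn g 1 (W p n)ᶜ := by
    intro p n
    obtain ⟨g, h0, h1, -⟩ := exists_continuous_zero_one_of_isClosed (hCclosed p n)
      ((hWopen p n).isClosed_compl)
      (Set.disjoint_compl_right_iff_subset.mpr (hCsub p n))
    exact ⟨g, h0, h1⟩
  choose g hg0 hg1 using hg
  -- h p n : 0 outside W p n, 1 at p
  have hh : ∀ p n, ∃ h : C(X, ℝ), Set.EqOn h 0 (W p n)ᶜ ∧ h p = 1 := by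
    intro p n
    obtain ⟨h, h0, h1, -⟩ := exists_continuous_zero_one_of_isClosed
      ((hWopen p n).isClosed_compl) (isClosed_singleton (x := p))
      (by simpa [Set.disjoint_singleton_right] using hWp p n)
    exact ⟨h, h0, h1 rfl⟩
  choose h hh0 hh1 using hh
  set D : Finset X := hf.toFinset with hD
  refine ⟨fun n x => f x * ∏ p ∈ D, g p n x + ∑ p ∈ D, f p * h p n x, ?_, ?_⟩
  · intro n
    apply Continuous.add
    · rw [continuous_iff_continuousAt]
      intro x
      by_cases hx : x ∈ D
      · -- locally zero near x since g x n = 0 on C x n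
        have : (fun y => f y * ∏ p ∈ D, g p n y) =ᶠ[𝓝 x] (fun _ => 0) := by
          filter_upwards [hCnhds x n] with y hy
          have : g x n y = 0 := hg0 x n hy
          exact mul_eq_zero_of_right _ (Finset.prod_eq_zero hx this)
        exact (continuousAt_const (y := (0:ℝ))).congr this.symm
      · have hfx : ContinuousAt f x := by
          by_contra hc
          exact hx (by simpa [hD, Set.Finite.mem_toFinset] using hc)
        exact hfx.mul (continuous_finset_prod D fun p _ => (g p n).continuous).continuousAt
    · exact continuous_finset_sum _ fun p _ => continuous_const.mul (h p n).continuous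
  · intro x
    have hev : ∀ᶠ n in atTop, (f x * ∏ p ∈ D, g p n x + ∑ p ∈ D, f p * h p n x) = f x := by
      by_cases hx : x ∈ D
      · -- x is a discontinuity point
        have hall : ∀ᶠ n in atTop, ∀ p ∈ D, p ≠ x → x ∉ W p n := by
          rw [eventually_all_finset]
          intro p hp
          by_cases hpx : p = x
          · simp [hpx]
          · filter_upwards [hesc p x (fun hxy => hpx hxy.symm)] with n hn _
            exact hn
        filter_upwards [hall] with n hn
        have hgz : g x n x = 0 := hg0 x n (mem_of_mem_nhds (hCnhds x n))
        have hprod : (∏ p ∈ D, g p n x) = 0 := Finset.prod_eq_zero hx hgz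
        have hsum : (∑ p ∈ D, f p * h p n x) = f x := by
          rw [Finset.sum_eq_single x]
          · rw [hh1 x n, mul_one]
          · intro p hp hpx
            rw [hh0 p n (hn p hp hpx), Pi.zero_apply, mul_zero]
          · intro hc; exact absurd hx hc
        rw [hprod, mul_zero, zero_add, hsum]
      · -- x is a continuity point
        have hall : ∀ᶠ n in atTop, ∀ p ∈ D, x ∉ W p n := by
          rw [eventually_all_finset]
          intro p hp
          have hxp : x ≠ p := fun hxy => hx (hxy ▸ hp)
          exact hesc p x hxp
        filter_upwards [hall] with n hn
        have hprod : (∏ p ∈ D, g p n x) = 1 := by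
          apply Finset.prod_eq_one
          intro p hp
          have := hg1 p n (hn p hp)
          simpa using this
        have hsum : (∑ p ∈ D, f p * h p n x) = 0 := by
          apply Finset.sum_eq_zero
          intro p hp
          rw [hh0 p n (hn p hp), Pi.zero_apply, mul_zero]
        rw [hprod, mul_one, hsum, add_zero]
    exact Tendsto.congr' (by filter_upwards [hev] with n hn; exact hn.symm) tendsto_const_nhds
end

section
/- If X is a normal space in which every subset is Gδ (a Q-space), then B₁(X) = F(X); in particular B₁(X) is a von Neumann regular ring. -/
/-!
In a Q-space every set is both Gδ and Fσ, so each level set of a countably-valued function is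
an increasing union of closed sets. On finite unions of these the function is locally constant,
so by Tietze it agrees there with a continuous function, and these extensions converge to it
pointwise (even eventually constantly). An arbitrary `f` is the uniform limit of the
countably-valued dyadic truncations `⌊2ᵏ f⌋ / 2ᵏ`, and a uniform limit with summable errors of
Baire-one functions is Baire one: telescope, clamp the approximants of the `k`-th difference to
its sup bound, and pass to the limit by Tannery's theorem. Once every function is Baire one,
`f * f * f⁻¹ = f` (with `0⁻¹ = 0`) gives regularity.
-/
open Filter Topology

open Set

theorem IsGδ.exists_monotone_isClosed_iUnion_eq_compl {X : Type*} [TopologicalSpace X]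
    {s : Set X} (hs : IsGδ s) :
    ∃ C : ℕ → Set X, (∀ n, IsClosed (C n)) ∧ Monotone C ∧ ⋃ n, C n = sᶜ := by
  obtain ⟨U, hU, rfl⟩ := hs.eq_iInter_nat
  refine ⟨accumulate fun n => (U n)ᶜ, fun n => ?_, monotone_accumulate, ?_⟩
  · rw [accumulate_def]
    exact (finite_Iic n).isClosed_biUnion fun i _ => (hU i).isClosed_compl
  · rw [iUnion_accumulate, compl_iInter]

theorem abs_sub_floor_mul_div_le {c : ℝ} (hc : 0 < c) (a : ℝ) : |a - ⌊c * a⌋ / c| ≤ 1 / c := by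
  have hfract : a - ⌊c * a⌋ / c = Int.fract (c * a) / c := by
    rw [← Int.self_sub_floor]; field_simp
  rw [hfract, abs_of_nonneg (div_nonneg (Int.fract_nonneg _) hc.le)]
  exact div_le_div_of_nonneg_right (Int.fract_lt_one _).le hc.le

section BaireOne

variable {X : Type*} [TopologicalSpace X]

theorem isBaireOne_of_continuousOn_closed_cover [NormalSpace X] {f : X → ℝ}
    {K : ℕ → Set X} (hK : ∀ n, IsClosed (K n)) (hf : ∀ n, ContinuousOn f (K n))
    (hcover : ∀ x, ∀ᶠ n in atTop, x ∈ K n) : IsBaireOne f := by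
  choose F hF using fun n =>
    ContinuousMap.exists_restrict_eq (hK n) ⟨(K n).domRestrict f, (hf n).domRestrict⟩
  have hFf : ∀ n, ∀ x ∈ K n, F n x = f x := fun n x hx =>
    congrArg (fun g : C(K n, ℝ) => g ⟨x, hx⟩) (hF n)
  refine ⟨fun n => F n, fun n => (F n).continuous, fun x => tendsto_const_nhds.congr' ?_⟩
  filter_upwards [hcover x] with n hn using (hFf n x hn).symm

theorem isBaireOne_of_countable_range [NormalSpace X] (hQ : ∀ s : Set X, IsGδ s)
    {f : X → ℝ} (hf : (range f).Countable) : IsBaireOne f := by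
  obtain ⟨e, he⟩ := countable_iff_exists_subset_range.1 hf
  choose C hC hCmono hCeq using fun i =>
    (hQ (f ⁻¹' {e i})ᶜ).exists_monotone_isClosed_iUnion_eq_compl
  simp only [compl_compl] at hCeq
  have hCf : ∀ i n, ∀ x ∈ C i n, f x = e i := fun i n x hx =>
    (hCeq i ▸ mem_iUnion_of_mem n hx : x ∈ f ⁻¹' {e i})
  refine isBaireOne_of_continuousOn_closed_cover (K := fun n => ⋃ i : Fin (n + 1), C i n)
    (fun n => isClosed_iUnion_of_finite fun i => hC i n)
    (fun n => (locallyFinite_of_finite _).continuousOn_iUnion (fun i => hC i n)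
      fun i => continuousOn_const.congr fun x hx => hCf i n x hx) fun x => ?_
  obtain ⟨i, hi⟩ := he (mem_range_self x)
  obtain ⟨N, hN⟩ := mem_iUnion.1 ((hCeq i).symm ▸ hi.symm : x ∈ ⋃ n, C i n)
  filter_upwards [eventually_ge_atTop (max i N)] with n hn
  exact mem_iUnion.2 ⟨⟨i, by omega⟩, hCmono i (le_of_max_le_right hn) hN⟩

theorem IsBaireOne.exists_abs_le {h : X → ℝ} {M : ℝ} (hh : IsBaireOne h)
    (hM : ∀ x, |h x| ≤ M) :
    ∃ F : ℕ → X → ℝ, (∀ n, Continuous (F n)) ∧ (∀ n x, |F n x| ≤ M) ∧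
      ∀ x, Tendsto (fun n => F n x) atTop (𝓝 (h x)) := by
  obtain ⟨F, hF, hFh⟩ := hh
  have hclamp : Continuous fun y : ℝ => max (-M) (min M y) := by fun_prop
  refine ⟨fun n x => max (-M) (min M (F n x)), fun n => hclamp.comp (hF n), fun n x => ?_,
    fun x => ?_⟩
  · have := abs_le.1 (hM x)
    exact abs_le.2 ⟨le_max_left _ _, max_le (by linarith) (min_le_left _ _)⟩
  · have hfix : max (-M) (min M (h x)) = h x := by
      have := abs_le.1 (hM x)
      rw [min_eq_right this.2, max_eq_right this.1]
    have := (hclamp.tendsto (h x)).comp (hFh x)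
    rwa [hfix] at this

theorem isBaireOne_tsum {h : ℕ → X → ℝ} {M : ℕ → ℝ} (hh : ∀ k, IsBaireOne (h k))
    (hM : Summable M) (hbound : ∀ k x, |h k x| ≤ M k) :
    IsBaireOne fun x => ∑' k, h k x := by
  choose D hD hDM hDh using fun k => (hh k).exists_abs_le (hbound k)
  refine ⟨fun n x => ∑ k ∈ Finset.range n, D k n x,
    fun n => continuous_finsetSum _ fun k _ => hD k n, fun x => ?_⟩
  have htrunc : ∀ n, ∑ k ∈ Finset.range n, D k n x = ∑' k, if k < n then D k n x else 0 := by
    intro n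
    rw [tsum_eq_sum (s := Finset.range n) fun k hk => if_neg (by simpa using hk)]
    exact Finset.sum_congr rfl fun k hk => (if_pos (Finset.mem_range.1 hk)).symm
  simp only [htrunc]
  refine tendsto_tsum_of_dominated_convergence hM (fun k => ?_) (Eventually.of_forall ?_)
  · refine (hDh k x).congr' ?_
    filter_upwards [eventually_gt_atTop k] with n hn using (if_pos hn).symm
  · intro n k
    split_ifs
    · exact hDM k n x
    · simpa using (abs_nonneg _).trans (hbound k x)

theorem isBaireOne_of_summable_approx {f : X → ℝ} {g : ℕ → X → ℝ} {ε : ℕ → ℝ}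
    (hg : ∀ k, IsBaireOne (g k)) (hε : Summable ε) (hfg : ∀ k x, |f x - g k x| ≤ ε k) :
    IsBaireOne f := by
  have hdiff : ∀ k x, |g (k + 1) x - g k x| ≤ ε (k + 1) + ε k := fun k x => by
    calc |g (k + 1) x - g k x| = |(f x - g k x) - (f x - g (k + 1) x)| := by ring_nf
      _ ≤ |f x - g k x| + |f x - g (k + 1) x| := abs_sub _ _
      _ ≤ ε (k + 1) + ε k := by linarith [hfg k x, hfg (k + 1) x]
  have hεsucc : Summable fun k => ε (k + 1) + ε k := ((summable_nat_add_iff 1).2 hε).add hε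
  have htsum : ∀ x, ∑' k, (g (k + 1) x - g k x) = f x - g 0 x := fun x => by
    have hsum : Summable fun k => g (k + 1) x - g k x := hεsucc.of_norm_bounded (hdiff · x)
    have hgf : Tendsto (fun n => g n x) atTop (𝓝 (f x)) := by
      refine tendsto_iff_norm_sub_tendsto_zero.2 (squeeze_zero (fun _ => norm_nonneg _)
        (fun k => ?_) hε.tendsto_atTop_zero)
      simpa [Real.norm_eq_abs, abs_sub_comm] using hfg k x
    refine tendsto_nhds_unique hsum.tendsto_sum_tsum_nat ?_
    exact (hgf.sub_const _).congr fun n => (Finset.sum_range_sub (fun i => g i x) n).symm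
  have hsplit : f = g 0 + fun x => ∑' k, (g (k + 1) x - g k x) := by
    ext x; simp [htsum]
  rw [hsplit]
  exact (B1 X).add_mem (hg 0) (isBaireOne_tsum (fun k => (B1 X).sub_mem (hg (k + 1)) (hg k))
    hεsucc hdiff)

theorem isBaireOne_of_forall_isGδ [NormalSpace X] (hQ : ∀ s : Set X, IsGδ s) (f : X → ℝ) :
    IsBaireOne f := by
  refine isBaireOne_of_summable_approx (g := fun k x => ⌊2 ^ k * f x⌋ / 2 ^ k)
    (fun k => isBaireOne_of_countable_range hQ ?_) summable_geometric_two fun k x => ?_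
  · exact (countable_range fun z : ℤ => (z : ℝ) / 2 ^ k).mono
      (range_subset_iff.2 fun x => mem_range_self _)
  · simpa only [one_div_pow] using abs_sub_floor_mul_div_le (by positivity) (f x)

end BaireOne

theorem stmt_17_general {X : Type*} [TopologicalSpace X] [NormalSpace X]
    (hQ : ∀ s : Set X, IsGδ s) :
    (∀ f : X → ℝ, IsBaireOne f) ∧
      ∀ f : ↥(B1 X), ∃ g : ↥(B1 X), f = f * f * g :=
  ⟨isBaireOne_of_forall_isGδ hQ, fun f =>
    ⟨⟨(f : X → ℝ)⁻¹, isBaireOne_of_forall_isGδ hQ _⟩,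
      Subtype.ext <| funext fun x => (mul_self_mul_inv ((f : X → ℝ) x)).symm⟩⟩

theorem stmt_17 {X : Type*} [TopologicalSpace X] [T1Space X] [NormalSpace X]
    (hQ : ∀ s : Set X, IsGδ s) :
    (∀ f : X → ℝ, IsBaireOne f) ∧
      ∀ f : ↥(B1 X), ∃ g : ↥(B1 X), f = f * f * g :=
  stmt_17_general hQ
end

section
/- Let Y be a B₁*-embedded subspace of X with Y normal, and let ρ : B₁(X) → B₁(Y) be the restriction homomorphism. Then ρ is an epimorphism in the category of rings: for any ring R and ring homomorphisms α, γ : B₁(Y) → R with α ∘ ρ = γ ∘ ρ, one has α = γ. -/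
open Filter Topology

lemma isBaireOne_comp {Y : Type*} [TopologicalSpace Y] {φ : ℝ → ℝ} (hφ : Continuous φ)
    {f : Y → ℝ} (hf : IsBaireOne f) : IsBaireOne (fun y => φ (f y)) := by
  obtain ⟨F, hF, hFf⟩ := hf
  exact ⟨fun n y => φ (F n y), fun n => hφ.comp (hF n),
    fun y => (hφ.tendsto _).comp (hFf y)⟩

theorem stmt_19 {X : Type*} [TopologicalSpace X] (Y : Set X) [NormalSpace Y]
    (hemb : ∀ f : Y → ℝ, IsBaireOne f → (∃ M : ℝ, ∀ y, |f y| ≤ M) →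
      ∃ g : X → ℝ, IsBaireOne g ∧ (∃ M : ℝ, ∀ x, |g x| ≤ M) ∧ ∀ y : Y, g y = f y)
    (ρ : ↥(B1 X) →+* ↥(B1 Y))
    (hρ : ∀ g : ↥(B1 X), (ρ g : Y → ℝ) = fun y : Y => (g : X → ℝ) (y : X))
    (R : Type*) [Ring R] (α γ : ↥(B1 Y) →+* R)
    (h : α.comp ρ = γ.comp ρ) : α = γ := by
  have hpos : ∀ t : ℝ, (0:ℝ) < 1 + t * t := fun t => by nlinarith [mul_self_nonneg t]
  ext f
  set fy : Y → ℝ := (f : Y → ℝ) with hfy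
  have hfB : IsBaireOne fy := f.2
  -- u = 1/(1+f²), v = f/(1+f²)
  have hu : IsBaireOne (fun y => (1 + fy y * fy y)⁻¹) := by
    have hc : Continuous fun t : ℝ => (1 + t * t)⁻¹ :=
      Continuous.inv₀ (continuous_const.add (continuous_id.mul continuous_id)) (fun t => (hpos t).ne')
    exact isBaireOne_comp hc hfB
  have hv : IsBaireOne (fun y => fy y * (1 + fy y * fy y)⁻¹) := by
    have hc : Continuous fun t : ℝ => t * (1 + t * t)⁻¹ :=
      continuous_id.mul (Continuous.inv₀ (continuous_const.add (continuous_id.mul continuous_id)) (fun t => (hpos t).ne'))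
    exact isBaireOne_comp hc hfB
  set U : ↥(B1 Y) := ⟨fun y => (1 + fy y * fy y)⁻¹, hu⟩ with hU
  set V : ↥(B1 Y) := ⟨fun y => fy y * (1 + fy y * fy y)⁻¹, hv⟩ with hV
  set W : ↥(B1 Y) := 1 + f * f with hW
  have hWcoe : ∀ y : Y, (W : Y → ℝ) y = 1 + fy y * fy y := by
    intro y; simp [hW, hfy]
  -- boundedness
  have hubd : ∃ M : ℝ, ∀ y : Y, |(1 + fy y * fy y)⁻¹| ≤ M := by
    refine ⟨1, fun y => ?_⟩
    rw [abs_of_pos (inv_pos.2 (hpos _))]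
    exact inv_le_one_of_one_le₀ (by nlinarith [mul_self_nonneg (fy y)])
  have hvbd : ∃ M : ℝ, ∀ y : Y, |fy y * (1 + fy y * fy y)⁻¹| ≤ M := by
    refine ⟨1, fun y => ?_⟩
    rw [abs_mul, abs_of_pos (inv_pos.2 (hpos _))]
    rw [← div_eq_mul_inv, div_le_one (hpos _)]
    nlinarith [abs_nonneg (fy y), sq_abs (fy y), mul_self_nonneg (|fy y| - 1)]
  -- extensions
  obtain ⟨g1, hg1B, _, hg1ext⟩ := hemb _ hu hubd
  obtain ⟨g2, hg2B, _, hg2ext⟩ := hemb _ hv hvbd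
  have hρ1 : ρ ⟨g1, hg1B⟩ = U := by
    apply Subtype.ext; rw [hρ]; funext y; exact hg1ext y
  have hρ2 : ρ ⟨g2, hg2B⟩ = V := by
    apply Subtype.ext; rw [hρ]; funext y; exact hg2ext y
  have hαU : α U = γ U := by
    rw [← hρ1]; exact RingHom.congr_fun h _
  have hαV : α V = γ V := by
    rw [← hρ2]; exact RingHom.congr_fun h _
  -- algebraic identities
  have hUW : U * W = 1 := by
    apply Subtype.ext; funext y
    show (U : Y → ℝ) y * (W : Y → ℝ) y = 1
    rw [hWcoe]; exact inv_mul_cancel₀ (hpos _).ne'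
  have hWU : W * U = 1 := by
    apply Subtype.ext; funext y
    show (W : Y → ℝ) y * (U : Y → ℝ) y = 1
    rw [hWcoe]; exact mul_inv_cancel₀ (hpos _).ne'
  have hfVW : f = V * W := by
    apply Subtype.ext; funext y
    show fy y = (V : Y → ℝ) y * (W : Y → ℝ) y
    rw [hWcoe]
    show fy y = fy y * (1 + fy y * fy y)⁻¹ * (1 + fy y * fy y)
    rw [mul_assoc, inv_mul_cancel₀ (hpos _).ne', mul_one]
  -- α W = γ W by uniqueness of inverses
  have hαW : α W = γ W := by
    have h1 : α W * α U = 1 := by rw [← map_mul, hWU, map_one]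
    have h2 : γ U * γ W = 1 := by rw [← map_mul, hUW, map_one]
    calc α W = α W * (γ U * γ W) := by rw [h2, mul_one]
      _ = (α W * α U) * γ W := by rw [hαU, mul_assoc]
      _ = γ W := by rw [h1, one_mul]
  rw [hfVW, map_mul, map_mul, hαV, hαW]
end
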